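/- arXiv:1804.10631 — 2 statements merged into one kernel-verified Lean document; each statement's English description precedes it below -/
import Mathlib

section
/- Let m be a positive integer, F_1,...,F_m complex numbers, and G_1,...,G_m : ℝ → ℂ locally integrable functions. Then for all t ∈ ℝ, the product ∏_{r=1}^m (F_r + ∫_0^t G_r(t_r) dt_r) equals the sum over all decompositions S_1 ⊔ S_2 = {1,...,m} of (∏_{r∈S_1} F_r) · (∑_{r∈S_2} ∫_0^t G_r(τ_r) (∏_{r̃∈S_2\{r}} ∫_0^{τ_r} G_{r̃}(τ_{r̃}) dτ_{r̃}) dτ_r). -/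
/-!
With `P r t = ∫₀ᵗ G r`, distributing the product over the sums `F r + P r t` leaves, for each
nonempty `S`, the identity `∏_{r ∈ S} P r t = ∑_{r ∈ S} ∫₀ᵗ G r τ ∏_{r' ∈ S \ {r}} P r' τ dτ`:
the product rule for the primitives, in integrated form. As the `G r` are only locally
integrable, it is proved by induction on `S` from the case of two factors, which is Fubini on
the square `(a, b]²` cut along its diagonal: integrating `f τ g σ` over `σ ≤ τ` and over `τ < σ`
gives `∫ f (∫ g)` and `∫ g (∫ f)`.
-/

open MeasureTheory Set

theorem MeasureTheory.LocallyIntegrable.intervalIntegrable {E : Type*} [NormedAddCommGroup E]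
    {f : ℝ → E} (hf : LocallyIntegrable f) (a b : ℝ) : IntervalIntegrable f volume a b :=
  (hf.integrableOn_isCompact isCompact_uIcc).intervalIntegrable

theorem MeasureTheory.LocallyIntegrable.continuous_primitive {E : Type*} [NormedAddCommGroup E]
    [NormedSpace ℝ E] {f : ℝ → E} (hf : LocallyIntegrable f) (a : ℝ) :
    Continuous fun x => ∫ t in a..x, f t :=
  intervalIntegral.continuous_primitive hf.intervalIntegrable a

section
variable {E : Type*} [NormedAddCommGroup E] [NormedSpace ℝ E] {f : ℝ → E} {a b x : ℝ}

theorem setIntegral_Ioc_indicator_Iic (hx : x ≤ b) :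
    ∫ t in Ioc a b, (Iic x).indicator f t = ∫ t in Ioc a x, f t := by
  rw [integral_indicator measurableSet_Iic, Measure.restrict_restrict measurableSet_Iic,
    Iic_inter_Ioc_of_le hx]

theorem setIntegral_Ioc_indicator_Iio (hx : x ≤ b) :
    ∫ t in Ioc a b, (Iio x).indicator f t = ∫ t in Ioc a x, f t := by
  have hset : Iio x ∩ Ioc a b = Ioo a x := by
    ext t
    simp only [mem_inter_iff, mem_Iio, mem_Ioc, mem_Ioo]
    constructor
    · rintro ⟨htx, hat, -⟩; exact ⟨hat, htx⟩
    · rintro ⟨hat, htx⟩; exact ⟨htx, hat, htx.le.trans hx⟩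
  rw [integral_indicator measurableSet_Iio, Measure.restrict_restrict measurableSet_Iio, hset,
    integral_Ioc_eq_integral_Ioo]

end

section
variable {𝕜 : Type*} [RCLike 𝕜] {f g : ℝ → 𝕜} {a b : ℝ}

theorem integral_mul_primitive_add_integral_mul_primitive_of_le (hab : a ≤ b)
    (hf : IntegrableOn f (Ioc a b)) (hg : IntegrableOn g (Ioc a b)) :
    (∫ τ in a..b, f τ * ∫ σ in a..τ, g σ) + (∫ τ in a..b, g τ * ∫ σ in a..τ, f σ) =
      (∫ τ in a..b, f τ) * ∫ τ in a..b, g τ := by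
  set μ := volume.restrict (Ioc a b) with hμ
  set T : Set (ℝ × ℝ) := {p | p.2 ≤ p.1}
  have hT : MeasurableSet T := measurableSet_le measurable_snd measurable_fst
  have hfg : Integrable (fun p : ℝ × ℝ => f p.1 * g p.2) (μ.prod μ) := hf.mul_prod hg
  have lower : ∫ p in T, f p.1 * g p.2 ∂μ.prod μ = ∫ τ in a..b, f τ * ∫ σ in a..τ, g σ := by
    rw [← integral_indicator hT, integral_prod _ (hfg.indicator hT),
      intervalIntegral.integral_of_le hab]
    refine setIntegral_congr_fun measurableSet_Ioc fun τ hτ => ?_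
    have hslice : ∀ σ,
        T.indicator (fun p => f p.1 * g p.2) (τ, σ) = f τ * (Iic τ).indicator g σ := by
      intro σ; by_cases h : σ ≤ τ <;> simp [T, h]
    simp_rw [hslice, integral_const_mul, hμ, setIntegral_Ioc_indicator_Iic hτ.2,
      intervalIntegral.integral_of_le hτ.1.le]
  have upper : ∫ p in Tᶜ, f p.1 * g p.2 ∂μ.prod μ = ∫ σ in a..b, g σ * ∫ τ in a..σ, f τ := by
    rw [← integral_indicator hT.compl, integral_prod_symm _ (hfg.indicator hT.compl),
      intervalIntegral.integral_of_le hab]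
    refine setIntegral_congr_fun measurableSet_Ioc fun σ hσ => ?_
    have hslice : ∀ τ,
        Tᶜ.indicator (fun p => f p.1 * g p.2) (τ, σ) = g σ * (Iio σ).indicator f τ := by
      intro τ; by_cases h : τ < σ <;> simp [T, h, mul_comm]
    simp_rw [hslice, integral_const_mul, hμ, setIntegral_Ioc_indicator_Iio hσ.2,
      intervalIntegral.integral_of_le hσ.1.le]
  rw [← lower, ← upper, integral_add_compl hT hfg, integral_prod_mul,
    intervalIntegral.integral_of_le hab, intervalIntegral.integral_of_le hab]

theorem integral_mul_primitive_eq_mul_sub_integral_mul_primitive_symm (hf : LocallyIntegrable f)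
    (hg : LocallyIntegrable g) (a b : ℝ) :
    ∫ τ in a..b, f τ * ∫ σ in a..τ, g σ =
      (∫ τ in a..b, f τ) * (∫ τ in a..b, g τ) - ∫ τ in b..a, f τ * ∫ σ in b..τ, g σ := by
  have hsplit : ∀ τ, ∫ σ in a..τ, g σ = (∫ σ in a..b, g σ) + ∫ σ in b..τ, g σ := fun τ =>
    (intervalIntegral.integral_add_adjacent_intervals (hg.intervalIntegrable a b)
      (hg.intervalIntegrable b τ)).symm
  calc ∫ τ in a..b, f τ * ∫ σ in a..τ, g σ
      = ∫ τ in a..b, (f τ * ∫ σ in a..b, g σ) + f τ * ∫ σ in b..τ, g σ :=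
        intervalIntegral.integral_congr fun τ _ => by rw [hsplit τ, mul_add]
    _ = (∫ τ in a..b, f τ) * (∫ τ in a..b, g τ) + ∫ τ in a..b, f τ * ∫ σ in b..τ, g σ := by
        rw [intervalIntegral.integral_add ((hf.intervalIntegrable a b).mul_const _)
          ((hf.intervalIntegrable a b).mul_continuousOn (hg.continuous_primitive b).continuousOn),
          intervalIntegral.integral_mul_const]
    _ = _ := by
        rw [intervalIntegral.integral_symm (f := fun τ => f τ * ∫ σ in b..τ, g σ) b a]; ring

theorem integral_mul_primitive_add_integral_mul_primitive (hf : LocallyIntegrable f)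
    (hg : LocallyIntegrable g) (a b : ℝ) :
    (∫ τ in a..b, f τ * ∫ σ in a..τ, g σ) + (∫ τ in a..b, g τ * ∫ σ in a..τ, f σ) =
      (∫ τ in a..b, f τ) * ∫ τ in a..b, g τ := by
  rcases le_total a b with hab | hba
  · exact integral_mul_primitive_add_integral_mul_primitive_of_le hab
      (hf.intervalIntegrable a b).1 (hg.intervalIntegrable a b).1
  · have hrev := integral_mul_primitive_add_integral_mul_primitive_of_le hba
      (hf.intervalIntegrable b a).1 (hg.intervalIntegrable b a).1
    rw [intervalIntegral.integral_symm (f := f) a b,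
      intervalIntegral.integral_symm (f := g) a b] at hrev
    rw [integral_mul_primitive_eq_mul_sub_integral_mul_primitive_symm hf hg,
      integral_mul_primitive_eq_mul_sub_integral_mul_primitive_symm hg hf]
    linear_combination -hrev

theorem prod_integral_eq_sum_integral_mul_prod_primitive {ι : Type*} [DecidableEq ι]
    {s : Finset ι} (hs : s.Nonempty) {G : ι → ℝ → 𝕜} (hG : ∀ i ∈ s, LocallyIntegrable (G i))
    (a b : ℝ) :
    ∏ i ∈ s, ∫ τ in a..b, G i τ =
      ∑ i ∈ s, ∫ τ in a..b, G i τ * ∏ j ∈ s.erase i, ∫ σ in a..τ, G j σ := by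
  induction hs using Finset.Nonempty.cons_induction generalizing b with
  | singleton i => simp
  | cons i s hi hs ih =>
    rw [Finset.forall_mem_cons] at hG
    obtain ⟨hGi, hGs⟩ := hG
    have hterm : ∀ j ∈ s,
        LocallyIntegrable (fun τ => G j τ * ∏ k ∈ s.erase j, ∫ σ in a..τ, G k σ) :=
      fun j hj => (hGs j hj).mul_continuous <| continuous_finsetProd _ fun k hk =>
        (hGs k (Finset.mem_of_mem_erase hk)).continuous_primitive a
    have hprim : ∀ τ, ∫ σ in a..τ, ∑ j ∈ s, G j σ * ∏ k ∈ s.erase j, ∫ ρ in a..σ, G k ρ =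
        ∏ j ∈ s, ∫ σ in a..τ, G j σ := fun τ => by
      rw [intervalIntegral.integral_finsetSum fun j hj => (hterm j hj).intervalIntegrable a τ,
        ih hGs τ]
    rw [Finset.prod_cons, ← hprim, ← integral_mul_primitive_add_integral_mul_primitive hGi
      (locallyIntegrable_finsetSum s hterm), Finset.sum_cons, Finset.erase_cons]
    congr 1
    · simp_rw [hprim]
    · simp_rw [Finset.sum_mul]
      rw [intervalIntegral.integral_finsetSum fun j hj =>
        ((hterm j hj).mul_continuous (hGi.continuous_primitive a)).intervalIntegrable a b]
      refine Finset.sum_congr rfl fun j hj => intervalIntegral.integral_congr fun τ _ => ?_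
      rw [Finset.erase_cons_of_ne hi (ne_of_mem_of_not_mem hj hi).symm, Finset.prod_cons]
      ring

end

theorem product_expansion_over_decompositions_general
    (m : ℕ) (F : Fin m → ℂ) (G : Fin m → ℝ → ℂ)
    (hG : ∀ r, LocallyIntegrable (G r) volume) (t : ℝ) :
    (∏ r : Fin m, (F r + ∫ τ in (0:ℝ)..t, G r τ)) =
      ∑ S₂ ∈ (Finset.univ : Finset (Fin m)).powerset,
        (∏ r ∈ S₂ᶜ, F r) *
          (if S₂ = ∅ then 1 else
            ∑ r ∈ S₂, ∫ τ in (0:ℝ)..t,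
              G r τ * ∏ r' ∈ S₂.erase r, ∫ σ in (0:ℝ)..τ, G r' σ) := by
  have hprod : ∀ S : Finset (Fin m), ∏ r ∈ S, ∫ τ in (0:ℝ)..t, G r τ =
      if S = ∅ then 1 else
        ∑ r ∈ S, ∫ τ in (0:ℝ)..t, G r τ * ∏ r' ∈ S.erase r, ∫ σ in (0:ℝ)..τ, G r' σ := by
    intro S
    split_ifs with hS
    · rw [hS, Finset.prod_empty]
    · exact prod_integral_eq_sum_integral_mul_prod_primitive (Finset.nonempty_iff_ne_empty.2 hS)
        (fun r _ => hG r) 0 t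
  calc ∏ r, (F r + ∫ τ in (0:ℝ)..t, G r τ)
      = ∏ r, ((∫ τ in (0:ℝ)..t, G r τ) + F r) := by simp_rw [add_comm]
    _ = ∑ S ∈ Finset.univ.powerset,
          (∏ r ∈ S, ∫ τ in (0:ℝ)..t, G r τ) * ∏ r ∈ Finset.univ \ S, F r := Finset.prod_add _ _ _
    _ = _ := Finset.sum_congr rfl fun S _ => by
      rw [hprod S, ← Finset.compl_eq_univ_sdiff, mul_comm]

/-- Lemma 2.5: product expansion over decompositions `S₁ ⊔ S₂ = {1,…,m}`. -/
theorem product_expansion_over_decompositions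
    (m : ℕ) (hm : 0 < m) (F : Fin m → ℂ) (G : Fin m → ℝ → ℂ)
    (hG : ∀ r, LocallyIntegrable (G r) volume) (t : ℝ) :
    (∏ r : Fin m, (F r + ∫ τ in (0:ℝ)..t, G r τ)) =
      ∑ S₂ ∈ (Finset.univ : Finset (Fin m)).powerset,
        (∏ r ∈ S₂ᶜ, F r) *
          (if S₂ = ∅ then 1 else
            ∑ r ∈ S₂, ∫ τ in (0:ℝ)..t,
              G r τ * ∏ r' ∈ S₂.erase r, ∫ σ in (0:ℝ)..τ, G r' σ) :=
  product_expansion_over_decompositions_general m F G hG t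
end

section
/- Let S_2 be a nonempty finite set, G_r : ℝ → ℂ locally integrable for r ∈ S_2, and t ∈ ℝ. Then ∏_{r∈S_2} ∫_0^t G_r(τ) dτ = ∑_{r∈S_2} ∫_0^t G_r(τ_r) · ∏_{r̃∈S_2\{r}} (∫_0^{τ_r} G_{r̃}(τ) dτ) dτ_r. -/
open MeasureTheory Set


lemma triangle_swap (f g : ℝ → ℂ) (a b : ℝ)
    (hf : IntegrableOn f (Ioc a b)) (hg : IntegrableOn g (Ioc a b)) :
    ∫ τ in Ioc a b, f τ * ∫ σ in Ioc τ b, g σ =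
      ∫ σ in Ioc a b, (∫ τ in Ioc a σ, f τ) * g σ := by
  set μ := volume.restrict (Ioc a b) with hμ
  set F : ℝ × ℝ → ℂ := fun p => ({p : ℝ × ℝ | p.1 < p.2}).indicator (fun p => f p.1 * g p.2) p
    with hF
  have hmeas : MeasurableSet {p : ℝ × ℝ | p.1 < p.2} := measurableSet_lt measurable_fst measurable_snd
  have hFi : Integrable F (μ.prod μ) := (Integrable.mul_prod hf hg).indicator hmeas
  have h1 : ∫ τ, (∫ σ, F (τ, σ) ∂μ) ∂μ = ∫ τ in Ioc a b, f τ * ∫ σ in Ioc τ b, g σ := by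
    refine setIntegral_congr_fun measurableSet_Ioc (fun τ hτ => ?_)
    have : ∀ σ : ℝ, F (τ, σ) = (Ioi τ).indicator (fun σ => f τ * g σ) σ := by
      intro σ
      simp only [hF, Set.indicator_apply, Set.mem_setOf_eq, Set.mem_Ioi]
    simp_rw [this]
    rw [hμ, setIntegral_indicator measurableSet_Ioi, Ioc_inter_Ioi,
      max_eq_right hτ.1.le, integral_const_mul]
  have h2 : ∫ σ, (∫ τ, F (τ, σ) ∂μ) ∂μ = ∫ σ in Ioc a b, (∫ τ in Ioc a σ, f τ) * g σ := by
    refine setIntegral_congr_fun measurableSet_Ioc (fun σ hσ => ?_)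
    have : ∀ τ : ℝ, F (τ, σ) = (Iio σ).indicator (fun τ => f τ * g σ) τ := by
      intro τ
      simp only [hF, Set.indicator_apply, Set.mem_setOf_eq, Set.mem_Iio]
    simp_rw [this]
    have hset : Ioc a b ∩ Iio σ = Ioo a σ := by
      ext τ
      simp only [mem_inter_iff, mem_Ioc, mem_Iio, mem_Ioo]
      exact ⟨fun h => ⟨h.1.1, h.2⟩, fun h => ⟨⟨h.1, h.2.le.trans hσ.2⟩, h.2⟩⟩
    rw [hμ, setIntegral_indicator measurableSet_Iio, hset, integral_mul_const,
      ← integral_Ioc_eq_integral_Ioo]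
  rw [← h1, ← h2]
  exact integral_integral_swap hFi

lemma key_swap (f g : ℝ → ℂ) (t : ℝ)
    (hf : IntervalIntegrable f volume 0 t) (hg : IntervalIntegrable g volume 0 t) :
    ∫ τ in (0:ℝ)..t, f τ * ∫ σ in τ..t, g σ =
      ∫ σ in (0:ℝ)..t, (∫ τ in (0:ℝ)..σ, f τ) * g σ := by
  rcases le_or_gt 0 t with ht | ht
  · have hf' : IntegrableOn f (Ioc 0 t) := (intervalIntegrable_iff_integrableOn_Ioc_of_le ht).1 hf
    have hg' : IntegrableOn g (Ioc 0 t) := (intervalIntegrable_iff_integrableOn_Ioc_of_le ht).1 hg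
    rw [intervalIntegral.integral_of_le ht, intervalIntegral.integral_of_le ht]
    have e1 : ∫ τ in Ioc 0 t, f τ * ∫ σ in τ..t, g σ
        = ∫ τ in Ioc 0 t, f τ * ∫ σ in Ioc τ t, g σ := by
      refine setIntegral_congr_fun measurableSet_Ioc (fun τ hτ => ?_)
      rw [intervalIntegral.integral_of_le hτ.2]
    have e2 : ∫ σ in Ioc 0 t, (∫ τ in (0:ℝ)..σ, f τ) * g σ
        = ∫ σ in Ioc 0 t, (∫ τ in Ioc 0 σ, f τ) * g σ := by
      refine setIntegral_congr_fun measurableSet_Ioc (fun σ hσ => ?_)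
      rw [intervalIntegral.integral_of_le hσ.1.le]
    rw [e1, e2]
    exact triangle_swap f g 0 t hf' hg'
  · have hf' : IntegrableOn f (Ioc t 0) := by
      have := hf.symm
      exact (intervalIntegrable_iff_integrableOn_Ioc_of_le ht.le).1 this
    have hg' : IntegrableOn g (Ioc t 0) := by
      have := hg.symm
      exact (intervalIntegrable_iff_integrableOn_Ioc_of_le ht.le).1 this
    rw [intervalIntegral.integral_of_ge ht.le, intervalIntegral.integral_of_ge ht.le]
    have e1 : ∫ τ in Ioc t 0, f τ * ∫ σ in τ..t, g σ
        = ∫ τ in Ioc t 0, -(f τ * ∫ σ in Ioc t τ, g σ) := by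
      refine setIntegral_congr_fun measurableSet_Ioc (fun τ hτ => ?_)
      rw [intervalIntegral.integral_of_ge hτ.1.le, mul_neg]
    have e2 : ∫ σ in Ioc t 0, (∫ τ in (0:ℝ)..σ, f τ) * g σ
        = ∫ σ in Ioc t 0, -((∫ τ in Ioc σ 0, f τ) * g σ) := by
      refine setIntegral_congr_fun measurableSet_Ioc (fun σ hσ => ?_)
      rw [intervalIntegral.integral_of_ge hσ.2, neg_mul]
    rw [e1, e2]
    simp only [integral_neg, neg_neg]
    have := triangle_swap g f t 0 hg' hf'
    calc ∫ τ in Ioc t 0, f τ * ∫ σ in Ioc t τ, g σ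
        = ∫ τ in Ioc t 0, (∫ σ in Ioc t τ, g σ) * f τ := by
          simp_rw [mul_comm]
      _ = ∫ σ in Ioc t 0, g σ * ∫ τ in Ioc σ 0, f τ := this.symm
      _ = ∫ σ in Ioc t 0, (∫ τ in Ioc σ 0, f τ) * g σ := by
          simp_rw [mul_comm]

section helpers
variable {f c : ℝ → ℂ}

lemma loc_ii (h : LocallyIntegrable f volume) (x y : ℝ) : IntervalIntegrable f volume x y :=
  (h.integrableOn_isCompact isCompact_uIcc).intervalIntegrable

lemma cont_prim (h : LocallyIntegrable f volume) :
    Continuous (fun τ => ∫ σ in (0:ℝ)..τ, f σ) :=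
  intervalIntegral.continuous_primitive (fun x y => loc_ii h x y) 0

lemma loc_mul_cont_ii (h : LocallyIntegrable f volume) (hc : Continuous c) (x y : ℝ) :
    IntervalIntegrable (fun τ => f τ * c τ) volume x y :=
  (((h.integrableOn_isCompact isCompact_uIcc).mul_continuousOn hc.continuousOn
    isCompact_uIcc)).intervalIntegrable
lemma cont_mul_loc_ii (hc : Continuous c) (h : LocallyIntegrable f volume) (x y : ℝ) :
    IntervalIntegrable (fun τ => c τ * f τ) volume x y :=
  ((IntegrableOn.continuousOn_mul hc.continuousOn
    (h.integrableOn_isCompact isCompact_uIcc) isCompact_uIcc)).intervalIntegrable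
end helpers

/-- The product of integrals over `[0,t]` equals the sum, over the maximal coordinate,
of iterated integrals. -/
theorem prod_integral_eq_sum_max_coordinate
    {ι : Type*} [DecidableEq ι] (S₂ : Finset ι) (hS₂ : S₂.Nonempty)
    (G : ι → ℝ → ℂ) (hG : ∀ r ∈ S₂, LocallyIntegrable (G r) volume) (t : ℝ) :
    (∏ r ∈ S₂, ∫ τ in (0:ℝ)..t, G r τ) =
      ∑ r ∈ S₂, ∫ τ in (0:ℝ)..t,
        G r τ * ∏ r' ∈ S₂.erase r, ∫ σ in (0:ℝ)..τ, G r' σ := by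
  induction hS₂ using Finset.Nonempty.cons_induction generalizing t with
  | singleton a =>
      simp [Finset.erase_singleton]
  | cons a s ha hs IH =>
      have hGa : LocallyIntegrable (G a) volume := hG a (Finset.mem_cons_self a s)
      have hGs : ∀ r ∈ s, LocallyIntegrable (G r) volume :=
        fun r hr => hG r (Finset.mem_cons.2 (Or.inr hr))
      have IH' := IH hGs
      let Fa : ℝ → ℂ := fun τ => ∫ σ in (0:ℝ)..τ, G a σ
      let P : ℝ → ℂ := fun τ => ∏ r ∈ s, ∫ σ in (0:ℝ)..τ, G r σ
      let Q : ι → ℝ → ℂ := fun r τ => ∏ r' ∈ s.erase r, ∫ σ in (0:ℝ)..τ, G r' σ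
      have hFac : Continuous Fa := cont_prim hGa
      have hPc : Continuous P :=
        continuous_finset_prod s (fun r hr => cont_prim (hGs r hr))
      have hQc : ∀ r, Continuous (Q r) := fun r =>
        continuous_finset_prod _ (fun r' hr' => cont_prim (hGs r' (Finset.mem_of_mem_erase hr')))
      -- the key Fubini identity
      have key2 : ∑ r ∈ s, (∫ τ in (0:ℝ)..t, (G r τ * Q r τ) * (∫ σ in τ..t, G a σ))
          = ∫ σ in (0:ℝ)..t, G a σ * P σ := by
        have key1 : ∀ r ∈ s,
            (∫ τ in (0:ℝ)..t, (G r τ * Q r τ) * (∫ σ in τ..t, G a σ))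
              = ∫ σ in (0:ℝ)..t, (∫ τ in (0:ℝ)..σ, G r τ * Q r τ) * G a σ :=
          fun r hr => key_swap _ _ t (loc_mul_cont_ii (hGs r hr) (hQc r) 0 t) (loc_ii hGa 0 t)
        rw [Finset.sum_congr rfl key1, ← intervalIntegral.integral_finset_sum]
        · refine intervalIntegral.integral_congr (fun σ _ => ?_)
          rw [← Finset.sum_mul, ← IH' σ, mul_comm]
        · exact fun r hr =>
            cont_mul_loc_ii (intervalIntegral.continuous_primitive
                (fun x y => loc_mul_cont_ii (hGs r hr) (hQc r) x y) 0) hGa 0 t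
      -- split each summand
      have split : ∀ r ∈ s,
          (∫ σ in (0:ℝ)..t, G a σ) * (∫ τ in (0:ℝ)..t, G r τ * Q r τ)
            = (∫ τ in (0:ℝ)..t, G r τ * ((∫ σ in (0:ℝ)..τ, G a σ) * Q r τ))
              + ∫ τ in (0:ℝ)..t, (G r τ * Q r τ) * (∫ σ in τ..t, G a σ) := by
        intro r hr
        have e2 : (∫ τ in (0:ℝ)..t, (G r τ * Q r τ) * (∫ σ in τ..t, G a σ))
            = ∫ τ in (0:ℝ)..t,
                G r τ * (Q r τ * ((∫ σ in (0:ℝ)..t, G a σ) - ∫ σ in (0:ℝ)..τ, G a σ)) := by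
          refine intervalIntegral.integral_congr (fun τ _ => ?_)
          rw [← intervalIntegral.integral_interval_sub_left (loc_ii hGa 0 t) (loc_ii hGa 0 τ)]
          ring
        rw [e2, ← intervalIntegral.integral_const_mul,
          ← intervalIntegral.integral_add
            (loc_mul_cont_ii (c := fun τ => (∫ σ in (0:ℝ)..τ, G a σ) * Q r τ) (hGs r hr) (hFac.mul (hQc r)) 0 t)
            (loc_mul_cont_ii (c := fun τ => Q r τ * ((∫ σ in (0:ℝ)..t, G a σ) - ∫ σ in (0:ℝ)..τ, G a σ)) (hGs r hr)
              ((hQc r).mul (continuous_const.sub hFac)) 0 t)]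
        refine intervalIntegral.integral_congr (fun τ _ => ?_)
        ring
      have key2' : ∑ r ∈ s, (∫ τ in (0:ℝ)..t, (G r τ * Q r τ) * (∫ σ in τ..t, G a σ))
          = ∫ τ in (0:ℝ)..t, G a τ * P τ := key2
      have hprod_erase : ∀ r ∈ s, ∀ τ : ℝ,
          (∏ r' ∈ (Finset.cons a s ha).erase r, ∫ σ in (0:ℝ)..τ, G r' σ)
            = (∫ σ in (0:ℝ)..τ, G a σ) * ∏ r' ∈ s.erase r, ∫ σ in (0:ℝ)..τ, G r' σ := by
        intro r hr τ
        have hne : a ≠ r := fun h => ha (h ▸ hr)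
        rw [Finset.cons_eq_insert, Finset.erase_insert_of_ne hne,
          Finset.prod_insert (fun h => ha (Finset.mem_of_mem_erase h))]
      rw [Finset.prod_cons, Finset.sum_cons, IH' t, Finset.mul_sum]
      calc ∑ r ∈ s, (∫ σ in (0:ℝ)..t, G a σ) *
              (∫ τ in (0:ℝ)..t, G r τ * ∏ r' ∈ s.erase r, ∫ σ in (0:ℝ)..τ, G r' σ)
          = ∑ r ∈ s, ((∫ τ in (0:ℝ)..t, G r τ * ((∫ σ in (0:ℝ)..τ, G a σ) * Q r τ))
              + ∫ τ in (0:ℝ)..t, (G r τ * Q r τ) * (∫ σ in τ..t, G a σ)) :=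
            Finset.sum_congr rfl split
        _ = (∑ r ∈ s, ∫ τ in (0:ℝ)..t, G r τ * ((∫ σ in (0:ℝ)..τ, G a σ) * Q r τ))
              + ∑ r ∈ s, ∫ τ in (0:ℝ)..t, (G r τ * Q r τ) * (∫ σ in τ..t, G a σ) :=
            Finset.sum_add_distrib
        _ = (∑ r ∈ s, ∫ τ in (0:ℝ)..t, G r τ * ((∫ σ in (0:ℝ)..τ, G a σ) * Q r τ))
              + ∫ τ in (0:ℝ)..t, G a τ * P τ := by rw [key2']
        _ = (∫ τ in (0:ℝ)..t,
              G a τ * ∏ r' ∈ (Finset.cons a s ha).erase a, ∫ σ in (0:ℝ)..τ, G r' σ)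
              + ∑ r ∈ s, ∫ τ in (0:ℝ)..t,
                  G r τ * ∏ r' ∈ (Finset.cons a s ha).erase r, ∫ σ in (0:ℝ)..τ, G r' σ := by
            rw [add_comm]
            congr 1
            · rw [Finset.erase_cons]
            · refine Finset.sum_congr rfl (fun r hr => ?_)
              refine intervalIntegral.integral_congr (fun τ _ => ?_)
              rw [hprod_erase r hr τ]
end
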